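/- Let u, v be natural numbers with u, v ≥ 3 and 1/u + 1/v < 1/2, and set w = u. Then the real symmetric matrix b(u,v,u) has exactly three positive eigenvalues and exactly one negative eigenvalue (counted with multiplicity); equivalently, the quadratic form x ↦ xᵀ b(u,v,u) x on ℝ⁴ has signature (+,+,+,−). -/

import Mathlib

/-!
The eigenvalues `λᵢ` of `b = b(u,v,u)` satisfy `∑ λᵢ = tr b = 4`, `∑ λᵢ² = tr b² ≤ 10 < 4²` and
`∏ λᵢ = det b = sin⁴(π/u) - cos²(π/v) < 0`, the last because
`sin(π/u) = cos(π/2 - π/u) < cos(π/v)`. A negative product means no `λᵢ` vanishes and an odd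
number are negative, while Cauchy–Schwarz gives `(∑ λᵢ)² ≤ #{i | 0 < λᵢ} · ∑ λᵢ²`, so at least
two are positive. With four eigenvalues, exactly one is negative.
-/

open Real Matrix

/-- The Coxeter–Schläfli matrix `b(u,v,w)` of the orthoscheme. -/
noncomputable def CSMatrix (u v w : ℕ) : Matrix (Fin 4) (Fin 4) ℝ :=
  !![1, -Real.cos (Real.pi / u), 0, 0;
     -Real.cos (Real.pi / u), 1, -Real.cos (Real.pi / v), 0;
     0, -Real.cos (Real.pi / v), 1, -Real.cos (Real.pi / w);
     0, 0, -Real.cos (Real.pi / w), 1]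

open Finset

theorem Matrix.IsHermitian.trace_mul_self_eq_sum_sq_eigenvalues {𝕜 n : Type*} [RCLike 𝕜]
    [Fintype n] [DecidableEq n] {A : Matrix n n 𝕜} (hA : A.IsHermitian) :
    (A * A).trace = ∑ i, (hA.eigenvalues i : 𝕜) ^ 2 := by
  conv_lhs => rw [hA.spectral_theorem, ← map_mul, Unitary.conjStarAlgAut_apply, trace_mul_cycle,
    Unitary.coe_star_mul_self, one_mul, diagonal_mul_diagonal, trace_diagonal]
  simp [sq]

section SignCount

variable {ι : Type*} [Fintype ι] (x : ι → ℝ)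

lemma sq_sum_le_card_filter_pos_mul_sum_sq (hx : 0 ≤ ∑ i, x i) :
    (∑ i, x i) ^ 2 ≤ #{i | 0 < x i} * ∑ i, x i ^ 2 :=
  calc (∑ i, x i) ^ 2 ≤ (∑ i with 0 < x i, x i) ^ 2 := by
        refine pow_le_pow_left₀ hx ?_ 2
        rw [← sum_filter_add_sum_filter_not univ (fun i => 0 < x i)]
        exact add_le_of_nonpos_right (sum_nonpos fun i hi => not_lt.mp (mem_filter.mp hi).2)
    _ ≤ #{i | 0 < x i} * ∑ i with 0 < x i, x i ^ 2 := sq_sum_le_card_mul_sum_sq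
    _ ≤ #{i | 0 < x i} * ∑ i, x i ^ 2 := by
        refine mul_le_mul_of_nonneg_left ?_ (Nat.cast_nonneg _)
        exact sum_le_sum_of_subset_of_nonneg (filter_subset _ _) fun i _ _ => sq_nonneg (x i)

lemma odd_card_filter_neg_of_prod_neg (hx : ∏ i, x i < 0) : Odd #{i | x i < 0} := by
  have hsign : ∏ i, x i = (-1) ^ #{i | x i < 0} * ∏ i, |x i| :=
    calc ∏ i, x i = ∏ i, (if x i < 0 then -1 else 1) * |x i| := by
          refine prod_congr rfl fun i _ => ?_
          split_ifs with hi
          · simp [abs_of_neg hi]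
          · simp [abs_of_nonneg (not_lt.mp hi)]
      _ = _ := by rw [prod_mul_distrib, prod_ite, prod_const, prod_const_one, mul_one]
  by_contra heven
  rw [hsign, (Nat.not_odd_iff_even.mp heven).neg_one_pow, one_mul] at hx
  exact hx.not_ge (prod_nonneg fun i _ => abs_nonneg (x i))

lemma card_filter_pos_add_card_filter_neg (hx : ∀ i, x i ≠ 0) :
    #{i | 0 < x i} + #{i | x i < 0} = Fintype.card ι := by
  rw [← card_univ, ← card_filter_add_card_filter_not (s := univ) (fun i => 0 < x i)]
  congr 2
  exact filter_congr fun i _ => by rw [not_lt, lt_iff_le_and_ne, and_iff_left (hx i)]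

lemma card_filter_pos_eq_three_and_card_filter_neg_eq_one (hι : Fintype.card ι = 4)
    (hprod : ∏ i, x i < 0) (hsum : 0 ≤ ∑ i, x i) (hsq : ∑ i, x i ^ 2 < (∑ i, x i) ^ 2) :
    #{i | 0 < x i} = 3 ∧ #{i | x i < 0} = 1 := by
  have htotal := card_filter_pos_add_card_filter_neg x
    fun i => prod_ne_zero_iff.mp hprod.ne i (mem_univ i)
  obtain ⟨k, hk⟩ := odd_card_filter_neg_of_prod_neg x hprod
  have hpos : 1 < #{i | 0 < x i} := by
    by_contra! h
    refine hsq.not_ge ((sq_sum_le_card_filter_pos_mul_sum_sq x hsum).trans ?_)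
    exact mul_le_of_le_one_left (sum_nonneg fun i _ => sq_nonneg (x i)) (by exact_mod_cast h)
  omega

end SignCount

lemma Real.sin_lt_cos_of_add_lt_pi_div_two {x y : ℝ} (hx : 0 ≤ x) (hy : 0 ≤ y)
    (hxy : x + y < π / 2) : sin x < cos y := by
  rw [← cos_pi_div_two_sub]
  exact cos_lt_cos_of_nonneg_of_le_pi hy (by linarith [pi_pos]) (by linarith)

section CSMatrix

variable (u v w : ℕ)

lemma CSMatrix_trace : (CSMatrix u v w).trace = 4 := by
  simp [CSMatrix, trace, Fin.sum_univ_four]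
  norm_num

lemma CSMatrix_trace_mul_self : (CSMatrix u v w * CSMatrix u v w).trace =
    4 + 2 * (cos (π / u) ^ 2 + cos (π / v) ^ 2 + cos (π / w) ^ 2) := by
  simp [CSMatrix, trace, Fin.sum_univ_four]
  ring

lemma CSMatrix_det : (CSMatrix u v w).det =
    (1 - cos (π / u) ^ 2) * (1 - cos (π / w) ^ 2) - cos (π / v) ^ 2 := by
  simp [CSMatrix, det_succ_row_zero, Fin.sum_univ_succ, Fin.succAbove]
  ring

lemma CSMatrix_det_neg (huv : (1 : ℝ) / u + 1 / v < 1 / 2) : (CSMatrix u v u).det < 0 := by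
  have hangles : π / u + π / v < π / 2 :=
    calc π / u + π / v = π * (1 / u + 1 / v) := by ring
      _ < π * (1 / 2) := mul_lt_mul_of_pos_left huv pi_pos
      _ = π / 2 := by ring
  have hu : 0 ≤ π / u := by positivity
  have hv : 0 ≤ π / v := by positivity
  have hs₀ : 0 ≤ sin (π / u) := sin_nonneg_of_nonneg_of_le_pi hu (by linarith [pi_pos])
  have hs₂ : sin (π / u) ^ 2 < cos (π / v) :=
    (pow_le_of_le_one hs₀ (sin_le_one _) two_ne_zero).trans_lt
      (sin_lt_cos_of_add_lt_pi_div_two hu hv hangles)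
  rw [CSMatrix_det, ← sin_sq, sub_neg, ← sq]
  exact pow_lt_pow_left₀ hs₂ (sq_nonneg _) two_ne_zero

end CSMatrix

theorem CSMatrix_signature_general (u v : ℕ)
    (huv : (1 : ℝ) / u + 1 / v < 1 / 2)
    (hb : (CSMatrix u v u).IsHermitian) :
    (Finset.univ.filter fun i => 0 < hb.eigenvalues i).card = 3 ∧
    (Finset.univ.filter fun i => hb.eigenvalues i < 0).card = 1 := by
  have htrace : ∑ i, hb.eigenvalues i = 4 := by
    simpa [CSMatrix_trace] using hb.trace_eq_sum_eigenvalues.symm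
  have htrace_sq : ∑ i, hb.eigenvalues i ^ 2 < 4 ^ 2 := by
    have := hb.trace_mul_self_eq_sum_sq_eigenvalues
    simp only [RCLike.ofReal_real_eq_id, id, CSMatrix_trace_mul_self] at this
    nlinarith [cos_sq_le_one (π / u), cos_sq_le_one (π / v)]
  have hdet : ∏ i, hb.eigenvalues i < 0 := by
    simpa [hb.det_eq_prod_eigenvalues] using CSMatrix_det_neg u v huv
  exact card_filter_pos_eq_three_and_card_filter_neg_eq_one _ (Fintype.card_fin 4) hdet
    (by rw [htrace]; norm_num) (by rwa [htrace])

/-- The symmetric matrix `b(u,v,u)` has signature `(+,+,+,−)`: three positive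
eigenvalues and one negative eigenvalue, counted with multiplicity. -/
theorem CSMatrix_signature (u v : ℕ) (hu : 3 ≤ u) (hv : 3 ≤ v)
    (huv : (1 : ℝ) / u + 1 / v < 1 / 2)
    (hb : (CSMatrix u v u).IsHermitian) :
    (Finset.univ.filter fun i => 0 < hb.eigenvalues i).card = 3 ∧
    (Finset.univ.filter fun i => hb.eigenvalues i < 0).card = 1 :=
  CSMatrix_signature_general u v huv hb
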